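/- Let G : ℝ^m → ℝ^n (n < m) be L-Lipschitz and uniformly Newton differentiable on its nonempty zero set Z with Newton differential 𝓗G such that every H ∈ 𝓗G(x) has full rank and sup{‖H⁺‖ : H ∈ 𝓗G(x), x ∈ ℝ^m} ≤ Ω < ∞. Assume proj_Z is single-valued and L_Z-Lipschitz, and 𝓗G is geometrically compatible with Z with constant P. Then there exist a neighborhood V of Z and constants such that for every x ∈ V, every H ∈ 𝓗G(x), and y = proj_{𝓐(x,H)} x, one has dist(y, Z) ≤ c(x) · P Ω (1 + L_Z L Ω) · dist(x, Z), where c(x) = sup_{z̄ ∈ Z} sup_{H ∈ 𝓗G(x)} ‖G(x) − H(x − z̄)‖/‖x − z̄‖; in particular iterates x^{k+1} ∈ 𝓝_{𝓗G}(x^k) started near Z satisfy dist(x^{k+1}, Z) ≤ c^k dist(x^k, Z) with c^k → 0. -/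

import Mathlib

open Metric

/-- Moore–Penrose pseudo-inverse of a full-rank wide matrix: `H⁺ = Hᵀ (H Hᵀ)⁻¹`. -/
noncomputable def Matrix.pinv {n m : ℕ} (A : Matrix (Fin n) (Fin m) ℝ) :
    Matrix (Fin m) (Fin n) ℝ :=
  A.transpose * (A * A.transpose)⁻¹

/-- Reinterpret a plain vector in `Fin k → ℝ` as a point of Euclidean space. -/
def toE {k : ℕ} (v : Fin k → ℝ) : EuclideanSpace ℝ (Fin k) := WithLp.toLp 2 v

/-- Reinterpret a point of Euclidean space as a plain vector in `Fin k → ℝ`. -/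
def fromE {k : ℕ} (v : EuclideanSpace ℝ (Fin k)) : Fin k → ℝ := v

/-- The local Newton-differentiability constant
`c(x) = sup_{z̄ ∈ Z} sup_{H ∈ 𝓗G(x)} ‖G(x) − H(x − z̄)‖ / ‖x − z̄‖`. -/
noncomputable def newtonConst {n m : ℕ}
    (G : EuclideanSpace ℝ (Fin m) → EuclideanSpace ℝ (Fin n))
    (HG : EuclideanSpace ℝ (Fin m) → Set (Matrix (Fin n) (Fin m) ℝ))
    (Z : Set (EuclideanSpace ℝ (Fin m))) (x : EuclideanSpace ℝ (Fin m)) : ℝ :=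
  sSup {r : ℝ | ∃ zbar ∈ Z, ∃ H ∈ HG x,
    r = ‖G x - toE (H.mulVec (x - zbar))‖ / ‖x - zbar‖}

/-!
One Newton step `y = proj_{𝓐(x,H)} x` moves `x` by at most `Ω ‖G x‖ ≤ Ω L dist(x, Z)`, so
`z = proj_Z y` lies within `(1 + L_Z L Ω) dist(x, Z)` of `x`. Geometric compatibility bounds
`dist(y, Z)` by `P ‖z - proj_{𝓐(x,H)} z‖`, and since `H⁺` turns the residual of `z` into a
correction landing in `𝓐(x, H)`, this is at most `P Ω ‖G x - H (x - z)‖ ≤ P Ω c(x) ‖x - z‖`.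

For `c(x)` to be finite, and to tend to `0` as `x → Z`, the Newton estimate, assumed only for
`z̄` close to `x`, has to be extended to every `z̄ ∈ Z`: along the segment from a point of `Z`
near `x` to `z̄` the linear map `H` is controlled, provided `Z` is convex. Convexity follows
from the Lipschitz continuity of `proj_Z` (a Bunt–Motzkin argument): the potential
`(‖v‖² - dist(v, Z)²) / 2 - ⟪v, z₀⟫` has gradient `proj_Z v - z₀` and is bounded below when `z₀`
is a convex combination of points of `Z`, so gradient steps show that `proj_Z v` comes
arbitrarily close to `z₀`.
-/

open Filter Topology
open scoped RealInnerProductSpace NNReal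

section NearestPoint

variable {E : Type*} [NormedAddCommGroup E] [InnerProductSpace ℝ E] {Z : Set E} {p : E → E}

-- For a nearest-point map `p` onto `Z` this is `(‖v‖² - dist(v, Z)²) / 2 - ⟪v, z₀⟫`.
noncomputable def nearestPotential (p : E → E) (z₀ v : E) : ℝ :=
  ⟪v, p v⟫ - ‖p v‖ ^ 2 / 2 - ⟪v, z₀⟫

lemma inner_sub_half_sq_le_of_nearest (hmin : ∀ w, ∀ z ∈ Z, ‖w - p w‖ ≤ ‖w - z‖) (v : E)
    {z : E} (hz : z ∈ Z) : ⟪v, z⟫ - ‖z‖ ^ 2 / 2 ≤ ⟪v, p v⟫ - ‖p v‖ ^ 2 / 2 := by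
  have h := pow_le_pow_left₀ (norm_nonneg _) (hmin v z hz) 2
  rw [norm_sub_sq_real, norm_sub_sq_real] at h
  linarith

lemma bddBelow_range_nearestPotential (hmin : ∀ w, ∀ z ∈ Z, ‖w - p w‖ ≤ ‖w - z‖)
    {z₁ z₂ : E} (hz₁ : z₁ ∈ Z) (hz₂ : z₂ ∈ Z) {a b : ℝ} (ha : 0 ≤ a) (hb : 0 ≤ b)
    (hab : a + b = 1) : BddBelow (Set.range (nearestPotential p (a • z₁ + b • z₂))) := by
  refine ⟨-(a * ‖z₁‖ ^ 2 + b * ‖z₂‖ ^ 2) / 2, ?_⟩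
  rintro _ ⟨v, rfl⟩
  have h₁ := mul_le_mul_of_nonneg_left (inner_sub_half_sq_le_of_nearest hmin v hz₁) ha
  have h₂ := mul_le_mul_of_nonneg_left (inner_sub_half_sq_le_of_nearest hmin v hz₂) hb
  rw [nearestPotential, inner_add_right, real_inner_smul_right, real_inner_smul_right]
  have hφ : ⟪v, p v⟫ - ‖p v‖ ^ 2 / 2 = (a + b) * (⟪v, p v⟫ - ‖p v‖ ^ 2 / 2) := by
    rw [hab, one_mul]
  linarith

lemma nearestPotential_sub_smul_le (hmem : ∀ w, p w ∈ Z)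
    (hmin : ∀ w, ∀ z ∈ Z, ‖w - p w‖ ≤ ‖w - z‖) {K : ℝ≥0} (hp : LipschitzWith K p) {s : ℝ}
    (hs : 0 ≤ s) (hKs : K * s ≤ 1 / 2) (z₀ v : E) :
    nearestPotential p z₀ (v - s • (p v - z₀)) ≤
      nearestPotential p z₀ v - s / 2 * ‖p v - z₀‖ ^ 2 := by
  set g := p v - z₀
  set u := v - s • g
  have hsup := inner_sub_half_sq_le_of_nearest hmin v (hmem u)
  have hLip : ‖p u - p v‖ ≤ K * (s * ‖g‖) := by
    simpa [u, norm_smul, abs_of_nonneg hs] using hp.norm_sub_le u v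
  have hcs : -(‖g‖ * ‖p u - p v‖) ≤ ⟪g, p u - p v⟫ :=
    neg_le_of_abs_le (abs_real_inner_le_norm _ _)
  -- `p u` is a supergradient: the potential changes by at most `⟪u - v, p u - z₀⟫`
  have hchange : nearestPotential p z₀ u - nearestPotential p z₀ v ≤
      -s * (‖g‖ ^ 2 + ⟪g, p u - p v⟫) := by
    have hg : ‖g‖ ^ 2 = ⟪g, p v⟫ - ⟪g, z₀⟫ := by
      rw [← real_inner_self_eq_norm_sq, inner_sub_right]
    simp only [nearestPotential, u, inner_sub_left, inner_sub_right, real_inner_smul_left] at hsup ⊢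
    linear_combination hsup + s * hg
  have hquad : s * (‖g‖ * ‖p u - p v‖) ≤ (K * s) * (s * ‖g‖ ^ 2) := by
    have := mul_le_mul_of_nonneg_left hLip (norm_nonneg g)
    nlinarith
  have hhalf : (K * s) * (s * ‖g‖ ^ 2) ≤ 1 / 2 * (s * ‖g‖ ^ 2) :=
    mul_le_mul_of_nonneg_right hKs (by positivity)
  nlinarith

theorem convex_of_lipschitzWith_nearest (hZ : IsClosed Z) (hmem : ∀ w, p w ∈ Z)
    (hmin : ∀ w, ∀ z ∈ Z, ‖w - p w‖ ≤ ‖w - z‖) {K : ℝ≥0} (hp : LipschitzWith K p) :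
    Convex ℝ Z := by
  intro z₁ hz₁ z₂ hz₂ a b ha hb hab
  set f := nearestPotential p (a • z₁ + b • z₂)
  have hbdd := bddBelow_range_nearestPotential hmin hz₁ hz₂ ha hb hab
  set s : ℝ := 1 / (2 * (K + 1))
  have hs : 0 < s := by positivity
  have hKs : (K : ℝ) * s ≤ 1 / 2 := by
    rw [mul_one_div, div_le_div_iff₀ (by positivity) two_pos]
    linarith
  rw [← hZ.closure_eq, Metric.mem_closure_iff]
  intro ε hε
  -- a gradient step from an almost-minimiser `v` of `f` cannot decrease `f` by `s ε² / 2`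
  obtain ⟨v, hv⟩ := exists_lt_of_ciInf_lt
    (lt_add_of_pos_right (⨅ v, f v) (by positivity : 0 < s / 2 * ε ^ 2))
  have hdesc := nearestPotential_sub_smul_le hmem hmin hp hs.le hKs (a • z₁ + b • z₂) v
  have hinf := ciInf_le hbdd (v - s • (p v - (a • z₁ + b • z₂)))
  refine ⟨p v, hmem v, ?_⟩
  have hsq : ‖p v - (a • z₁ + b • z₂)‖ ^ 2 < ε ^ 2 := by nlinarith
  rw [dist_comm, dist_eq_norm]
  exact (pow_lt_pow_iff_left₀ (norm_nonneg _) hε.le two_ne_zero).1 hsq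

end NearestPoint

section ConvexResidual

variable {E F : Type*} [NormedAddCommGroup E] [NormedSpace ℝ E] [NormedAddCommGroup F]
  [NormedSpace ℝ F] {Z : Set E} (T : E →ₗ[ℝ] F) (b : F) {x p z : E} {δ ε : ℝ}

theorem Convex.norm_map_sub_le_of_local (hZ : Convex ℝ Z) (hδ : 0 < δ) (hε : 0 ≤ ε)
    (hp : p ∈ Z) (hxp : ‖x - p‖ ≤ δ / 4)
    (hloc : ∀ z ∈ Z, ‖x - z‖ ≤ δ → ‖b - T (x - z)‖ ≤ ε * ‖x - z‖) (hz : z ∈ Z)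
    (hzp : δ / 2 ≤ ‖z - p‖) : ‖T (z - p)‖ ≤ 2 * ε * ‖z - p‖ := by
  have hd : 0 < ‖z - p‖ := by linarith
  set τ := δ / (2 * ‖z - p‖)
  have hτ : 0 < τ := by positivity
  have hτd : τ * ‖z - p‖ = δ / 2 := by simp only [τ]; field_simp
  have hτ1 : τ ≤ 1 := by rw [div_le_one (by positivity)]; linarith
  set zτ := p + τ • (z - p)
  have hzτ : zτ ∈ Z := hZ.add_smul_sub_mem hp hz ⟨hτ.le, hτ1⟩
  have hxzτ : ‖x - zτ‖ ≤ 3 * δ / 4 := by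
    calc ‖x - zτ‖ = ‖(x - p) - τ • (z - p)‖ := by congr 1; simp only [zτ]; abel
      _ ≤ ‖x - p‖ + τ * ‖z - p‖ := (norm_sub_le _ _).trans_eq (by
        rw [norm_smul, Real.norm_eq_abs, abs_of_pos hτ])
      _ ≤ 3 * δ / 4 := by linarith
  have hsplit : τ • T (z - p) = (b - T (x - zτ)) - (b - T (x - p)) := by
    rw [← map_smul, sub_sub_sub_cancel_left, ← map_sub]
    congr 1
    simp only [zτ]
    abel
  have hτT : τ * ‖T (z - p)‖ ≤ τ * (2 * ε * ‖z - p‖) := by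
    have h₁ := hloc p hp (by linarith)
    have h₂ := hloc zτ hzτ (by linarith)
    calc τ * ‖T (z - p)‖ = ‖(b - T (x - zτ)) - (b - T (x - p))‖ := by
          rw [← hsplit, norm_smul, Real.norm_eq_abs, abs_of_pos hτ]
      _ ≤ ε * ‖x - zτ‖ + ε * ‖x - p‖ := (norm_sub_le _ _).trans (add_le_add h₂ h₁)
      _ ≤ ε * (3 * δ / 4) + ε * (δ / 4) := by gcongr
      _ = τ * (2 * ε * ‖z - p‖) := by linear_combination (-2 * ε) * hτd
  exact le_of_mul_le_mul_left hτT hτ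

theorem Convex.norm_sub_map_sub_le_of_local (hZ : Convex ℝ Z) (hδ : 0 < δ) (hε : 0 ≤ ε)
    (hp : p ∈ Z) (hxp : ‖x - p‖ ≤ δ / 4)
    (hloc : ∀ z ∈ Z, ‖x - z‖ ≤ δ → ‖b - T (x - z)‖ ≤ ε * ‖x - z‖) (hz : z ∈ Z) :
    ‖b - T (x - z)‖ ≤ 3 * ε * ‖x - z‖ := by
  by_cases hnear : ‖x - z‖ ≤ δ
  · exact (hloc z hz hnear).trans (by nlinarith [norm_nonneg (x - z)])
  replace hnear := not_le.1 hnear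
  have hzp : ‖z - p‖ ≤ ‖x - z‖ + δ / 4 := by
    calc ‖z - p‖ = ‖(x - p) - (x - z)‖ := by congr 1; abel
      _ ≤ ‖x - p‖ + ‖x - z‖ := norm_sub_le _ _
      _ ≤ ‖x - z‖ + δ / 4 := by linarith
  have hzp' : δ / 2 ≤ ‖z - p‖ := by
    have := norm_sub_le (x - p) (z - p)
    rw [sub_sub_sub_cancel_right] at this
    linarith
  have hTzp := hZ.norm_map_sub_le_of_local T b hδ hε hp hxp hloc hz hzp'
  have hxz : x - z = (x - p) - (z - p) := by abel
  calc ‖b - T (x - z)‖ = ‖(b - T (x - p)) + T (z - p)‖ := by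
        rw [hxz, map_sub]; congr 1; abel
    _ ≤ ε * ‖x - p‖ + 2 * ε * ‖z - p‖ :=
        (norm_add_le _ _).trans (add_le_add (hloc p hp (by linarith)) hTzp)
    _ ≤ ε * (δ / 4) + 2 * ε * (‖x - z‖ + δ / 4) := by gcongr
    _ ≤ 3 * ε * ‖x - z‖ := by nlinarith

end ConvexResidual

lemma nonneg_of_forall_norm_sub_le_mul {E F : Type*} [NormedAddCommGroup E] [Nontrivial E]
    [SeminormedAddCommGroup F] {f : E → F} {K : ℝ} (h : ∀ a b, ‖f a - f b‖ ≤ K * ‖a - b‖) :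
    0 ≤ K := by
  obtain ⟨a, ha⟩ := exists_ne (0 : E)
  have := (norm_nonneg _).trans (h a 0)
  rw [sub_zero] at this
  exact nonneg_of_mul_nonneg_left this (norm_pos_iff.2 ha)

lemma norm_sub_eq_infDist_of_nearest {E : Type*} [SeminormedAddCommGroup E] {Z : Set E}
    {p : E → E} (hmem : ∀ w, p w ∈ Z) (hmin : ∀ w, ∀ z ∈ Z, ‖w - p w‖ ≤ ‖w - z‖) (w : E) :
    ‖w - p w‖ = infDist w Z :=
  le_antisymm
    ((le_infDist ⟨_, hmem w⟩).2 fun z hz => (hmin w z hz).trans_eq (dist_eq_norm w z).symm)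
    ((infDist_le_dist_of_mem (hmem w)).trans_eq (dist_eq_norm _ _))

theorem tendsto_of_local_contraction {X : Type*} {D c : X → ℝ} {r : ℝ} (hD : ∀ x, 0 ≤ D x)
    (hc : ∀ x, D x < r → c x ≤ 1 / 2) {xs : ℕ → X} (hx0 : D (xs 0) < r)
    (hstep : ∀ k, D (xs k) < r → D (xs (k + 1)) ≤ c (xs k) * D (xs k)) :
    (∀ k, D (xs k) < r) ∧ Tendsto (fun k => D (xs k)) atTop (𝓝 0) := by
  have hhalve : ∀ k, D (xs k) < r → D (xs (k + 1)) ≤ D (xs k) / 2 := fun k hk =>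
    (hstep k hk).trans (by nlinarith [hc _ hk, hD (xs k)])
  have hr : ∀ k, D (xs k) < r := fun k => Nat.rec hx0 (fun k hk =>
    ((hhalve k hk).trans (half_le_self (hD _))).trans_lt hk) k
  have hbound : ∀ k, D (xs k) ≤ D (xs 0) * (1 / 2) ^ k := by
    intro k
    induction k with
    | zero => simp
    | succ k ih => rw [pow_succ]; linarith [hhalve k (hr k)]
  refine ⟨hr, squeeze_zero (fun k => hD _) hbound ?_⟩
  simpa using (tendsto_pow_atTop_nhds_zero_of_lt_one (by norm_num)
    (by norm_num : (1 / 2 : ℝ) < 1)).const_mul (D (xs 0))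

theorem Matrix.mul_pinv_of_rank_eq {n m : ℕ} {A : Matrix (Fin n) (Fin m) ℝ} (h : A.rank = n) :
    A * A.pinv = 1 := by
  have hrange : LinearMap.range (A * A.transpose).mulVecLin = ⊤ := by
    apply Submodule.eq_top_of_finrank_eq
    rw [Module.finrank_fin_fun, ← Matrix.rank, Matrix.rank_self_mul_transpose, h]
  have hunit : IsUnit (A * A.transpose) :=
    Matrix.mulVec_surjective_iff_isUnit.1 (LinearMap.range_eq_top.1 hrange)
  rw [Matrix.pinv, ← Matrix.mul_assoc,
    Matrix.mul_nonsing_inv _ ((Matrix.isUnit_iff_isUnit_det _).1 hunit)]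

theorem LinearMap.exists_apply_eq_norm_sub_le {E F : Type*} [SeminormedAddCommGroup E]
    [SeminormedAddCommGroup F] [Module ℝ E] [Module ℝ F] (T : E →ₗ[ℝ] F) {R : F → E}
    (hTR : ∀ v, T (R v) = v) {Ω : ℝ} (hR : ∀ v, ‖R v‖ ≤ Ω * ‖v‖) (w : E) (c : F) :
    ∃ u, T u = c ∧ ‖w - u‖ ≤ Ω * ‖T w - c‖ :=
  ⟨w - R (T w - c), by rw [map_sub, hTR, sub_sub_cancel], by rw [sub_sub_cancel]; exact hR _⟩

section Euclidean

local notation "ℝ^" k:max => EuclideanSpace ℝ (Fin k)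

variable {n m : ℕ}

lemma toE_mulVec_sub (H : Matrix (Fin n) (Fin m) ℝ) (x y : ℝ^m) :
    toE (H.mulVec (x - y)) = Matrix.toEuclideanLin H (x - y) := rfl

lemma toE_mulVec_fromE (H : Matrix (Fin n) (Fin m) ℝ) (v : ℝ^m) :
    toE (H.mulVec (fromE v)) = Matrix.toEuclideanLin H v := rfl

lemma norm_sub_le_of_isNearest_affine {H : Matrix (Fin n) (Fin m) ℝ} (hH : H.rank = n)
    {Ω : ℝ} (hΩ : ∀ v : ℝ^n, ‖toE (H.pinv.mulVec v)‖ ≤ Ω * ‖v‖) {b : ℝ^n} {x : ℝ^m}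
    {π : ℝ^m → ℝ^m} (hπ : ∀ w u, b + toE (H.mulVec (fromE (u - x))) = 0 → ‖w - π w‖ ≤ ‖w - u‖)
    (w : ℝ^m) : ‖w - π w‖ ≤ Ω * ‖b - toE (H.mulVec (x - w))‖ := by
  set T := Matrix.toEuclideanLin H
  have hTR : ∀ v : ℝ^n, T (toE (H.pinv.mulVec v)) = v := fun v => by
    change toE (H.mulVec (H.pinv.mulVec v)) = v
    rw [Matrix.mulVec_mulVec, Matrix.mul_pinv_of_rank_eq hH, Matrix.one_mulVec]
    rfl
  obtain ⟨u, hu, hwu⟩ := T.exists_apply_eq_norm_sub_le hTR hΩ w (T x - b)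
  have hu𝓐 : b + toE (H.mulVec (fromE (u - x))) = 0 := by
    rw [toE_mulVec_fromE, map_sub, hu]
    abel
  calc ‖w - π w‖ ≤ ‖w - u‖ := hπ w u hu𝓐
    _ ≤ Ω * ‖T w - (T x - b)‖ := hwu
    _ = Ω * ‖b - toE (H.mulVec (x - w))‖ := by
      rw [toE_mulVec_sub, map_sub]
      congr 2
      abel

variable {G : ℝ^m → ℝ^n} {HG : ℝ^m → Set (Matrix (Fin n) (Fin m) ℝ)} {Z : Set (ℝ^m)}

theorem exists_forall_norm_residual_le (hZ : Convex ℝ Z)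
    (hND : ∀ ε > 0, ∃ δ > 0, ∀ x : ℝ^m, ∀ zbar ∈ Z, ‖x - zbar‖ ≤ δ → ∀ H ∈ HG x,
      ‖G x - toE (H.mulVec (x - zbar))‖ ≤ ε * ‖x - zbar‖) {ε : ℝ} (hε : 0 < ε) :
    ∃ δ > 0, ∀ x, infDist x Z < δ → ∀ z ∈ Z, ∀ H ∈ HG x,
      ‖G x - toE (H.mulVec (x - z))‖ ≤ ε * ‖x - z‖ := by
  obtain ⟨δ, hδ, hloc⟩ := hND (ε / 3) (by positivity)
  refine ⟨δ / 4, by positivity, fun x hx z hz H hH => ?_⟩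
  obtain ⟨p, hp, hxp⟩ := (infDist_lt_iff ⟨z, hz⟩).1 hx
  rw [dist_eq_norm] at hxp
  have := hZ.norm_sub_map_sub_le_of_local (Matrix.toEuclideanLin H) (G x) hδ (by positivity) hp
    hxp.le (fun z' hz' h => hloc x z' hz' h H hH) hz
  rwa [mul_div_cancel₀ _ three_ne_zero] at this

lemma newtonConst_nonneg (x : ℝ^m) : 0 ≤ newtonConst G HG Z x :=
  Real.sSup_nonneg (by rintro _ ⟨z, -, H, -, rfl⟩; positivity)

lemma newtonConst_le {x : ℝ^m} {C : ℝ} (hC : 0 ≤ C)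
    (h : ∀ z ∈ Z, ∀ H ∈ HG x, ‖G x - toE (H.mulVec (x - z))‖ ≤ C * ‖x - z‖) :
    newtonConst G HG Z x ≤ C :=
  Real.sSup_le (by
    rintro _ ⟨z, hz, H, hH, rfl⟩
    exact div_le_of_le_mul₀ (norm_nonneg _) hC (h z hz H hH)) hC

lemma norm_residual_le_newtonConst (hGZ : ∀ z ∈ Z, G z = 0) {x : ℝ^m} {C : ℝ} (hC : 0 ≤ C)
    (h : ∀ z ∈ Z, ∀ H ∈ HG x, ‖G x - toE (H.mulVec (x - z))‖ ≤ C * ‖x - z‖) {z : ℝ^m}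
    (hz : z ∈ Z) {H : Matrix (Fin n) (Fin m) ℝ} (hH : H ∈ HG x) :
    ‖G x - toE (H.mulVec (x - z))‖ ≤ newtonConst G HG Z x * ‖x - z‖ := by
  rcases eq_or_ne x z with rfl | hxz
  · simp [toE, hGZ x hz]
  have hpos : 0 < ‖x - z‖ := norm_pos_iff.2 (sub_ne_zero.2 hxz)
  rw [← div_le_iff₀ hpos]
  refine le_csSup ⟨C, ?_⟩ ⟨z, hz, H, hH, rfl⟩
  rintro _ ⟨z', hz', H', hH', rfl⟩
  exact div_le_of_le_mul₀ (norm_nonneg _) hC (h z' hz' H' hH')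

theorem tendsto_newtonConst (hZ : Convex ℝ Z)
    (hND : ∀ ε > 0, ∃ δ > 0, ∀ x : ℝ^m, ∀ zbar ∈ Z, ‖x - zbar‖ ≤ δ → ∀ H ∈ HG x,
      ‖G x - toE (H.mulVec (x - zbar))‖ ≤ ε * ‖x - zbar‖) {xs : ℕ → ℝ^m}
    (hxs : Tendsto (fun k => infDist (xs k) Z) atTop (𝓝 0)) :
    Tendsto (fun k => newtonConst G HG Z (xs k)) atTop (𝓝 0) := by
  refine Metric.tendsto_atTop.2 fun ε hε => ?_
  obtain ⟨δ, hδ, hres⟩ := exists_forall_norm_residual_le hZ hND (half_pos hε)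
  obtain ⟨N, hN⟩ := Metric.tendsto_atTop.1 hxs δ hδ
  refine ⟨N, fun k hk => ?_⟩
  have hd : infDist (xs k) Z < δ := by
    simpa [Real.dist_eq, abs_of_nonneg infDist_nonneg] using hN k hk
  rw [Real.dist_eq, sub_zero, abs_of_nonneg (newtonConst_nonneg _)]
  exact (newtonConst_le (half_pos hε).le (hres _ hd)).trans_lt (half_lt_self hε)

theorem infDist_newtonStep_le {x : ℝ^m} {H : Matrix (Fin n) (Fin m) ℝ} {π projZ : ℝ^m → ℝ^m}
    {L LZ P Ω C : ℝ} (hL : ∀ a b, ‖G a - G b‖ ≤ L * ‖a - b‖) (hGZ : ∀ z ∈ Z, G z = 0)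
    (hLZ : 0 ≤ LZ) (hprojZLip : ∀ a b, ‖projZ a - projZ b‖ ≤ LZ * ‖a - b‖)
    (hprojZmem : ∀ w, projZ w ∈ Z) (hprojZdist : ‖x - projZ x‖ = infDist x Z)
    (hP : 0 ≤ P) (hΩ : 0 ≤ Ω) (hC : 0 ≤ C)
    (hπ : ∀ w, ‖w - π w‖ ≤ Ω * ‖G x - toE (H.mulVec (x - w))‖)
    (hgc : ‖π x - projZ (π x)‖ ≤ P * ‖projZ (π x) - π (projZ (π x))‖)
    (hres : ‖G x - toE (H.mulVec (x - projZ (π x)))‖ ≤ C * ‖x - projZ (π x)‖) :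
    infDist (π x) Z ≤ C * (P * Ω * (1 + LZ * L * Ω)) * infDist x Z := by
  set y := π x
  set z := projZ y
  have hGx : ‖G x‖ ≤ L * infDist x Z := by
    have := hL x (projZ x)
    rwa [hGZ _ (hprojZmem x), sub_zero, hprojZdist] at this
  have hxy : ‖x - y‖ ≤ Ω * (L * infDist x Z) := by
    have := hπ x
    rw [toE_mulVec_sub, sub_self, map_zero, sub_zero] at this
    exact this.trans (mul_le_mul_of_nonneg_left hGx hΩ)
  have hxz : ‖x - z‖ ≤ (1 + LZ * L * Ω) * infDist x Z := by
    calc ‖x - z‖ ≤ ‖x - projZ x‖ + ‖projZ x - z‖ := norm_sub_le_norm_sub_add_norm_sub _ _ _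
      _ ≤ infDist x Z + LZ * (Ω * (L * infDist x Z)) :=
        add_le_add hprojZdist.le ((hprojZLip x y).trans (mul_le_mul_of_nonneg_left hxy hLZ))
      _ = (1 + LZ * L * Ω) * infDist x Z := by ring
  calc infDist y Z ≤ ‖y - z‖ := (infDist_le_dist_of_mem (hprojZmem y)).trans_eq (dist_eq_norm _ _)
    _ ≤ P * ‖z - π z‖ := hgc
    _ ≤ P * (Ω * (C * ‖x - z‖)) := by gcongr; exact (hπ z).trans (by gcongr)
    _ ≤ P * (Ω * (C * ((1 + LZ * L * Ω) * infDist x Z))) := by gcongr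
    _ = C * (P * Ω * (1 + LZ * L * Ω)) * infDist x Z := by ring

end Euclidean

theorem stmt_14_general {n m : ℕ} (hnm : n < m)
    (G : EuclideanSpace ℝ (Fin m) → EuclideanSpace ℝ (Fin n)) (L : ℝ)
    (hL : ∀ a b : EuclideanSpace ℝ (Fin m), ‖G a - G b‖ ≤ L * ‖a - b‖)
    (Z : Set (EuclideanSpace ℝ (Fin m))) (hZ : Z = {z | G z = 0})
    (HG : EuclideanSpace ℝ (Fin m) → Set (Matrix (Fin n) (Fin m) ℝ))
    (hrank : ∀ x, ∀ H ∈ HG x, H.rank = n)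
    (Ω : ℝ) (hΩpos : 0 < Ω)
    (hΩ : ∀ x, ∀ H ∈ HG x, ∀ v : EuclideanSpace ℝ (Fin n),
      ‖toE (H.pinv.mulVec v)‖ ≤ Ω * ‖v‖)
    -- uniform Newton differentiability of `G` on `Z`
    (hND : ∀ ε > 0, ∃ δ > 0, ∀ x : EuclideanSpace ℝ (Fin m), ∀ zbar ∈ Z,
      ‖x - zbar‖ ≤ δ → ∀ H ∈ HG x,
        ‖G x - toE (H.mulVec (x - zbar))‖ ≤ ε * ‖x - zbar‖)
    -- single-valued Lipschitz projection onto `Z`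
    (projZ : EuclideanSpace ℝ (Fin m) → EuclideanSpace ℝ (Fin m))
    (hprojZmem : ∀ w, projZ w ∈ Z)
    (hprojZmin : ∀ w, ∀ z ∈ Z, ‖w - projZ w‖ ≤ ‖w - z‖)
    (LZ : ℝ)
    (hprojZLip : ∀ a b : EuclideanSpace ℝ (Fin m),
      ‖projZ a - projZ b‖ ≤ LZ * ‖a - b‖)
    -- Euclidean projection onto the affine sets `𝓐(x, H)`
    (projA : EuclideanSpace ℝ (Fin m) → Matrix (Fin n) (Fin m) ℝ →
      EuclideanSpace ℝ (Fin m) → EuclideanSpace ℝ (Fin m))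
    (hprojAmin : ∀ x, ∀ H ∈ HG x, ∀ w u,
      G x + toE (H.mulVec (fromE (u - x))) = 0 → ‖w - projA x H w‖ ≤ ‖w - u‖)
    -- geometric compatibility of `𝓗G` with `Z`, with constant `P ≥ 1`
    (P : ℝ) (hP : 1 ≤ P)
    (hgc : ∃ δ > 0, ∀ x : EuclideanSpace ℝ (Fin m), infDist x Z < δ →
      ∀ H ∈ HG x,
        ‖projA x H x - projZ (projA x H x)‖ ≤
          P * ‖projZ (projA x H x) - projA x H (projZ (projA x H x))‖) :
    ∃ V : Set (EuclideanSpace ℝ (Fin m)), IsOpen V ∧ Z ⊆ V ∧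
      (∀ x ∈ V, ∀ H ∈ HG x,
        infDist (projA x H x) Z ≤
          newtonConst G HG Z x * (P * Ω * (1 + LZ * L * Ω)) * infDist x Z) ∧
      (∀ xs : ℕ → EuclideanSpace ℝ (Fin m), xs 0 ∈ V →
        (∀ k, ∃ H ∈ HG (xs k), xs (k + 1) = projA (xs k) H (xs k)) →
        ∃ c : ℕ → ℝ, Filter.Tendsto c Filter.atTop (nhds 0) ∧
          ∀ k, infDist (xs (k + 1)) Z ≤ c k * infDist (xs k) Z) := by
  obtain ⟨δgc, hδgc, hgc⟩ := hgc
  have : Nonempty (Fin m) := ⟨⟨0, by omega⟩⟩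
  have hL0 : 0 ≤ L := nonneg_of_forall_norm_sub_le_mul hL
  have hLZ0 : 0 ≤ LZ := nonneg_of_forall_norm_sub_le_mul hprojZLip
  have hGZ : ∀ z ∈ Z, G z = 0 := fun z hz => by rwa [hZ] at hz
  have hZconv : Convex ℝ Z := by
    have hZclosed : IsClosed Z := hZ ▸ isClosed_eq
      (LipschitzWith.of_dist_le' (K := L) (by simpa only [dist_eq_norm] using hL)).continuous
      continuous_const
    exact convex_of_lipschitzWith_nearest hZclosed hprojZmem hprojZmin
      (LipschitzWith.of_dist_le' (K := LZ) (by simpa only [dist_eq_norm] using hprojZLip))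
  set K := P * Ω * (1 + LZ * L * Ω)
  have hK : 0 ≤ K := by positivity
  obtain ⟨δ, hδ, hres⟩ := exists_forall_norm_residual_le hZconv hND
    (by positivity : 0 < 1 / (2 * (K + 1)))
  have hstep : ∀ x, infDist x Z < min δgc δ → ∀ H ∈ HG x,
      infDist (projA x H x) Z ≤ newtonConst G HG Z x * K * infDist x Z := fun x hx H hH =>
    infDist_newtonStep_le hL hGZ hLZ0 hprojZLip hprojZmem
      (norm_sub_eq_infDist_of_nearest hprojZmem hprojZmin x) (by positivity) hΩpos.le
      (newtonConst_nonneg x)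
      (norm_sub_le_of_isNearest_affine (hrank x H hH) (hΩ x H hH) (hprojAmin x H hH))
      (hgc x (lt_min_iff.1 hx).1 H hH)
      (norm_residual_le_newtonConst hGZ (by positivity) (hres x (lt_min_iff.1 hx).2)
        (hprojZmem _) hH)
  have hcontract : ∀ x, infDist x Z < min δgc δ → newtonConst G HG Z x * K ≤ 1 / 2 :=
    fun x hx => calc
      newtonConst G HG Z x * K ≤ 1 / (2 * (K + 1)) * K := by
        gcongr; exact newtonConst_le (by positivity) (hres x (lt_min_iff.1 hx).2)
      _ ≤ 1 / 2 := by
        rw [div_mul_eq_mul_div, one_mul, div_le_div_iff₀ (by positivity) two_pos]; linarith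
  refine ⟨{x | infDist x Z < min δgc δ}, isOpen_lt (continuous_infDist_pt Z) continuous_const,
    fun z hz => by simpa [infDist_zero_of_mem hz] using ⟨hδgc, hδ⟩, hstep, fun xs hx0 hxs => ?_⟩
  have hiter : ∀ k, infDist (xs k) Z < min δgc δ → infDist (xs (k + 1)) Z ≤
      newtonConst G HG Z (xs k) * K * infDist (xs k) Z := fun k hk => by
    obtain ⟨H, hH, hnext⟩ := hxs k
    exact hnext ▸ hstep _ hk H hH
  obtain ⟨hV, hlim⟩ := tendsto_of_local_contraction (fun _ => infDist_nonneg) hcontract hx0 hiter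
  exact ⟨fun k => newtonConst G HG Z (xs k) * K,
    by simpa using (tendsto_newtonConst hZconv hND hlim).mul_const K, fun k => hiter k (hV k)⟩

/-- super-linear convergence of the under-determined Newton method.
`G : ℝ^m → ℝ^n` (`n < m`) is `L`-Lipschitz and uniformly Newton differentiable on its
nonempty zero set `Z` with Newton differential `𝓗G`, all `H ∈ 𝓗G(x)` have full rank,
`‖H⁺‖ ≤ Ω` uniformly, `projZ` is the single-valued `L_Z`-Lipschitz projection onto `Z`,
`projA x H` is the Euclidean projection onto the affine set
`𝓐(x,H) = {w | G(x) + H(w − x) = 0}`, and `𝓗G` is geometrically compatible with `Z`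
with constant `P ≥ 1`.  Then there is a neighborhood `V` of `Z` such that one Newton
step from `x ∈ V` satisfies
`dist(projA x H x, Z) ≤ c(x)·P·Ω·(1 + L_Z·L·Ω)·dist(x, Z)`, and any iterate sequence
started in `V` satisfies `dist(x^{k+1}, Z) ≤ c^k·dist(x^k, Z)` with `c^k → 0`. -/
theorem stmt_14 {n m : ℕ} (hnm : n < m)
    (G : EuclideanSpace ℝ (Fin m) → EuclideanSpace ℝ (Fin n)) (L : ℝ)
    (hL : ∀ a b : EuclideanSpace ℝ (Fin m), ‖G a - G b‖ ≤ L * ‖a - b‖)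
    (Z : Set (EuclideanSpace ℝ (Fin m))) (hZ : Z = {z | G z = 0}) (hZne : Z.Nonempty)
    (HG : EuclideanSpace ℝ (Fin m) → Set (Matrix (Fin n) (Fin m) ℝ))
    (hHGne : ∀ x, (HG x).Nonempty)
    (hrank : ∀ x, ∀ H ∈ HG x, H.rank = n)
    (Ω : ℝ) (hΩpos : 0 < Ω)
    (hΩ : ∀ x, ∀ H ∈ HG x, ∀ v : EuclideanSpace ℝ (Fin n),
      ‖toE (H.pinv.mulVec v)‖ ≤ Ω * ‖v‖)
    -- uniform Newton differentiability of `G` on `Z`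
    (hND : ∀ ε > 0, ∃ δ > 0, ∀ x : EuclideanSpace ℝ (Fin m), ∀ zbar ∈ Z,
      ‖x - zbar‖ ≤ δ → ∀ H ∈ HG x,
        ‖G x - toE (H.mulVec (x - zbar))‖ ≤ ε * ‖x - zbar‖)
    -- single-valued Lipschitz projection onto `Z`
    (projZ : EuclideanSpace ℝ (Fin m) → EuclideanSpace ℝ (Fin m))
    (hprojZmem : ∀ w, projZ w ∈ Z)
    (hprojZmin : ∀ w, ∀ z ∈ Z, ‖w - projZ w‖ ≤ ‖w - z‖)
    (LZ : ℝ)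
    (hprojZLip : ∀ a b : EuclideanSpace ℝ (Fin m),
      ‖projZ a - projZ b‖ ≤ LZ * ‖a - b‖)
    -- Euclidean projection onto the affine sets `𝓐(x, H)`
    (projA : EuclideanSpace ℝ (Fin m) → Matrix (Fin n) (Fin m) ℝ →
      EuclideanSpace ℝ (Fin m) → EuclideanSpace ℝ (Fin m))
    (hprojAmem : ∀ x, ∀ H ∈ HG x, ∀ w,
      G x + toE (H.mulVec (fromE (projA x H w - x))) = 0)
    (hprojAmin : ∀ x, ∀ H ∈ HG x, ∀ w u,
      G x + toE (H.mulVec (fromE (u - x))) = 0 → ‖w - projA x H w‖ ≤ ‖w - u‖)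
    -- geometric compatibility of `𝓗G` with `Z`, with constant `P ≥ 1`
    (P : ℝ) (hP : 1 ≤ P)
    (hgc : ∃ δ > 0, ∀ x : EuclideanSpace ℝ (Fin m), infDist x Z < δ →
      ∀ H ∈ HG x,
        ‖projA x H x - projZ (projA x H x)‖ ≤
          P * ‖projZ (projA x H x) - projA x H (projZ (projA x H x))‖) :
    ∃ V : Set (EuclideanSpace ℝ (Fin m)), IsOpen V ∧ Z ⊆ V ∧
      (∀ x ∈ V, ∀ H ∈ HG x,
        infDist (projA x H x) Z ≤
          newtonConst G HG Z x * (P * Ω * (1 + LZ * L * Ω)) * infDist x Z) ∧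
      (∀ xs : ℕ → EuclideanSpace ℝ (Fin m), xs 0 ∈ V →
        (∀ k, ∃ H ∈ HG (xs k), xs (k + 1) = projA (xs k) H (xs k)) →
        ∃ c : ℕ → ℝ, Filter.Tendsto c Filter.atTop (nhds 0) ∧
          ∀ k, infDist (xs (k + 1)) Z ≤ c k * infDist (xs k) Z) :=
  stmt_14_general hnm G L hL Z hZ HG hrank Ω hΩpos hΩ hND projZ hprojZmem hprojZmin LZ hprojZLip
    projA hprojAmin P hP hgc
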